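/- arXiv:1009.5176 — 4 statements merged into one kernel-verified Lean document; each statement's English description precedes it below -/
import Mathlib

section
/- Let P be an H-group and P' a saturated sub-H-group of P (i.e., P' is a union of path components of P). Then for every g ∈ P, the set of path components of the left coset gP' has the same cardinality as the set of path components of P'. -/
open ContinuousMap

universe u v

/-- An H-group: a pointed space with continuous multiplication, homotopy inverse and the
constant map as homotopy identity, satisfying the H-group axioms up to pointed homotopy. -/
structure HGroup (P : Type u) [TopologicalSpace P] where
  pt : P
  mul : C(P × P, P)
  inv : C(P, P)
  mul_pt : mul (pt, pt) = pt
  inv_pt : inv pt = pt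
  left_id : HomotopicRel ⟨fun g => mul (pt, g), by fun_prop⟩ (ContinuousMap.id P) {pt}
  right_id : HomotopicRel ⟨fun g => mul (g, pt), by fun_prop⟩ (ContinuousMap.id P) {pt}
  left_inv : HomotopicRel ⟨fun g => mul (inv g, g), by fun_prop⟩ (const P pt) {pt}
  right_inv : HomotopicRel ⟨fun g => mul (g, inv g), by fun_prop⟩ (const P pt) {pt}
  assoc : HomotopicRel ⟨fun p : P × P × P => mul (mul (p.1, p.2.1), p.2.2), by fun_prop⟩
      ⟨fun p : P × P × P => mul (p.1, mul (p.2.1, p.2.2)), by fun_prop⟩ {(pt, pt, pt)}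

/-- `Jtn S g` : `g` homotopically belongs to `S`, i.e. there is a path in the ambient
space from `g` to a point of `S`. -/
def Jtn {P : Type u} [TopologicalSpace P] (S : Set P) (g : P) : Prop := ∃ s ∈ S, Joined g s

/-- The class of `g` in `π₀`. -/
def pc {P : Type u} [TopologicalSpace P] (g : P) : ZerothHomotopy P :=
  Quotient.mk (pathSetoid P) g

namespace HGroup
variable {P : Type u} [TopologicalSpace P]

/-- The left coset `g·S = {g' | η(g)·g' ∈̃ S}`. -/
def lcoset (H : HGroup P) (g : P) (S : Set P) : Set P :=
  {g' | Jtn S (H.mul (H.inv g, g'))}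

/-- The right coset `S·g = {g' | g'·η(g) ∈̃ S}`. -/
def rcoset (H : HGroup P) (S : Set P) (g : P) : Set P :=
  {g' | Jtn S (H.mul (g', H.inv g))}

/-- The pointwise product of two subsets. -/
def mulSet (H : HGroup P) (A B : Set P) : Set P := {p | ∃ a ∈ A, ∃ b ∈ B, p = H.mul (a, b)}

end HGroup

/-- A subset is saturated if it is a union of path components of the ambient space. -/
def Saturated {P : Type u} [TopologicalSpace P] (A : Set P) : Prop :=
  ∀ x ∈ A, ∀ y, Joined x y → y ∈ A

/-- A sub-H-group: a pointed subspace which is itself an H-group such that the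
inclusion is an H-homomorphism (via pointed homotopies). -/
structure SubHGroup {P : Type u} [TopologicalSpace P] (H : HGroup P) where
  carrier : Set P
  struct : HGroup carrier
  pt_val : (struct.pt : P) = H.pt
  incl_mul : HomotopicRel
    ⟨fun p : carrier × carrier => (struct.mul p : P), by fun_prop⟩
    ⟨fun p : carrier × carrier => H.mul (p.1, p.2), by fun_prop⟩
    {(struct.pt, struct.pt)}
  incl_inv : HomotopicRel
    ⟨fun x : carrier => (struct.inv x : P), by fun_prop⟩
    ⟨fun x : carrier => H.inv x, by fun_prop⟩
    {struct.pt}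

/-- A sub-H-group is normal if `g·n·g⁻¹` homotopically belongs to it for all `g`, `n`. -/
def SubHGroup.Normal {P : Type u} [TopologicalSpace P] {H : HGroup P}
    (N : SubHGroup H) : Prop :=
  ∀ g : P, ∀ n ∈ N.carrier, Jtn N.carrier (H.mul (H.mul (g, n), H.inv g))

/-- The set of left cosets of `S` in `P`. -/
def Cosets {P : Type u} [TopologicalSpace P] (H : HGroup P) (S : Set P) :=
  {T : Set P // ∃ g : P, T = H.lcoset g S}

/-- The left coset of `S` represented by `g`, as an element of `Cosets H S`. -/
def cst {P : Type u} [TopologicalSpace P] (H : HGroup P) (S : Set P) (g : P) : Cosets H S :=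
  ⟨H.lcoset g S, g, rfl⟩

/-- The coset equivalence relation: `g₁ ∼ g₂` iff `g₁·η(g₂) ∈̃ S`. -/
def cosetRel {P : Type u} [TopologicalSpace P] (H : HGroup P) (S : Set P)
    (g₁ g₂ : P) : Prop :=
  Jtn S (H.mul (g₁, H.inv g₂))

/-!
Left multiplication by `g` maps `P'` into `gP'`, and left multiplication by `η(g)` maps `gP'`
back into `P'` by saturation. By associativity and the inverse and unit laws, both composites
are joined by paths to the identity pointwise, and since both sets are saturated these paths
can be taken inside them, so the two maps are mutually inverse on path components.
-/

theorem ContinuousMap.HomotopicRel.joined {X Y : Type*} [TopologicalSpace X]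
    [TopologicalSpace Y] {f g : C(X, Y)} {S : Set X} (h : HomotopicRel f g S) (x : X) :
    Joined (f x) (g x) :=
  ⟨h.some.evalAt x⟩

namespace ZerothHomotopy

variable {X Y : Type*} [TopologicalSpace X] [TopologicalSpace Y]

def map (f : C(X, Y)) : ZerothHomotopy X → ZerothHomotopy Y :=
  Quotient.map f fun _ _ h => h.map f.continuous

def equivOfJoined (f : C(X, Y)) (g : C(Y, X)) (hgf : ∀ x, Joined (g (f x)) x)
    (hfg : ∀ y, Joined (f (g y)) y) : ZerothHomotopy X ≃ ZerothHomotopy Y where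
  toFun := map f
  invFun := map g
  left_inv := Quotient.ind fun x => Quotient.sound (hgf x)
  right_inv := Quotient.ind fun y => Quotient.sound (hfg y)

end ZerothHomotopy

namespace Saturated

variable {X : Type*} [TopologicalSpace X] {A : Set X}

theorem joinedIn (hA : Saturated A) {x y : X} (hx : x ∈ A) (h : Joined x y) :
    JoinedIn A x y := by
  obtain ⟨γ⟩ := h
  refine ⟨γ, fun t => hA x hx (γ t) ?_⟩
  exact ⟨(γ.truncate 0 t).cast (by simp [min_eq_left t.2.1]) (γ.extend_extends' t).symm⟩

theorem joined_subtype (hA : Saturated A) {x y : A} (h : Joined (x : X) y) : Joined x y :=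
  (hA.joinedIn x.2 h).joined_subtype

end Saturated

namespace HGroup

variable {P : Type u} [TopologicalSpace P] (H : HGroup P)

theorem joined_inv_mul_mul (g x : P) : Joined (H.mul (H.inv g, H.mul (g, x))) x :=
  (H.assoc.joined (H.inv g, g, x)).symm.trans <|
    ((H.left_inv.joined g).map (by fun_prop : Continuous fun a => H.mul (a, x))).trans <|
      H.left_id.joined x

theorem joined_mul_inv_mul (g x : P) : Joined (H.mul (g, H.mul (H.inv g, x))) x :=
  (H.assoc.joined (g, H.inv g, x)).symm.trans <|
    ((H.right_inv.joined g).map (by fun_prop : Continuous fun a => H.mul (a, x))).trans <|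
      H.left_id.joined x

theorem saturated_lcoset (g : P) (S : Set P) : Saturated (H.lcoset g S) := by
  rintro x ⟨s, hs, hxs⟩ y hxy
  exact ⟨s, hs, ((hxy.map (by fun_prop : Continuous fun z => H.mul (H.inv g, z))).symm).trans hxs⟩

theorem mapsTo_mul_lcoset (g : P) (S : Set P) :
    Set.MapsTo (fun x => H.mul (g, x)) S (H.lcoset g S) :=
  fun x hx => ⟨x, hx, H.joined_inv_mul_mul g x⟩

theorem mapsTo_inv_mul_of_saturated {S : Set P} (hS : Saturated S) (g : P) :
    Set.MapsTo (fun y => H.mul (H.inv g, y)) (H.lcoset g S) S :=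
  fun _ ⟨s, hs, hys⟩ => hS s hs _ hys.symm

def lcosetZerothHomotopyEquiv {S : Set P} (hS : Saturated S) (g : P) :
    ZerothHomotopy (H.lcoset g S) ≃ ZerothHomotopy S :=
  ZerothHomotopy.equivOfJoined
    ⟨_, .restrict (H.mapsTo_inv_mul_of_saturated hS g) (by fun_prop)⟩
    ⟨_, .restrict (H.mapsTo_mul_lcoset g S) (by fun_prop)⟩
    (fun y => (H.saturated_lcoset g S).joined_subtype (H.joined_mul_inv_mul g y))
    (fun x => hS.joined_subtype (H.joined_inv_mul_mul g x))

end HGroup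

/-- For a saturated sub-H-group `P'` and any `g`, the set of path components of the left
coset `gP'` has the same cardinality as the set of path components of `P'`. -/
theorem stmt_3 {P : Type u} [TopologicalSpace P] (H : HGroup P) (P' : SubHGroup H)
    (hsat : Saturated P'.carrier) (g : P) :
    Cardinal.mk (ZerothHomotopy ↥(H.lcoset g P'.carrier)) =
      Cardinal.mk (ZerothHomotopy ↥P'.carrier) :=
  Cardinal.mk_congr (H.lcosetZerothHomotopyEquiv hsat g)
end

section
/- Let P be an H-group and let A be a saturated subset of P containing the base point which is closed under the multiplication μ and the homotopy inverse η of P (i.e., μ(A × A) ⊆ A and η(A) ⊆ A). Then A, with the restricted structure maps, is a sub-H-group of P; in particular the inclusion A → P is a monomorphism in the pointed homotopy category. -/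
open ContinuousMap

universe u v

/-!
A saturated subset `A` contains every path that starts in it, so any homotopy in `P` between
two maps into `A` already runs inside `A`. Hence each H-group axiom of `P`, precomposed with the
inclusion, is a homotopy between maps into `A` and lifts to `A`; the same lifting property
is the monicity of the inclusion.
-/

namespace ContinuousMap.HomotopicRel

variable {X Y Z : Type*} [TopologicalSpace X] [TopologicalSpace Y] [TopologicalSpace Z]

theorem precomp {f₀ f₁ : C(Y, Z)} {S : Set Y} (h : HomotopicRel f₀ f₁ S) (k : C(X, Y))
    {T : Set X} (hkT : Set.MapsTo k T S) : HomotopicRel (f₀.comp k) (f₁.comp k) T :=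
  h.map fun F => ⟨F.toHomotopy.compContinuousMap k, fun t x hx => F.prop t (k x) (hkT hx)⟩

end ContinuousMap.HomotopicRel

namespace Saturated

variable {P : Type*} [TopologicalSpace P] {A : Set P}

theorem path_apply_mem (hA : Saturated A) {x y : P} (γ : Path x y) (hx : x ∈ A)
    (t : unitInterval) : γ t ∈ A :=
  hA x hx (γ t) ⟨(γ.truncateOfLE t.2.1).cast (by simp) (by simp)⟩

theorem homotopicRel_of_comp_val (hA : Saturated A) {X : Type*} [TopologicalSpace X]
    {f₀ f₁ : C(X, A)} {S : Set X}
    (h : HomotopicRel (((ContinuousMap.id P).restrict A).comp f₀)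
      (((ContinuousMap.id P).restrict A).comp f₁) S) :
    HomotopicRel f₀ f₁ S :=
  h.map fun F =>
    { toFun := fun p => ⟨F p, hA.path_apply_mem (F.evalAt p.2) (f₀ p.2).2 p.1⟩
      continuous_toFun := F.continuous.subtype_mk _
      map_zero_left := fun x => Subtype.ext (F.apply_zero x)
      map_one_left := fun x => Subtype.ext (F.apply_one x)
      prop' := fun t x hx => Subtype.ext (F.prop t x hx) }

end Saturated

namespace HGroup

variable {P : Type u} [TopologicalSpace P]

def restrict (H : HGroup P) (A : Set P) (hA : Saturated A) (hpt : H.pt ∈ A)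
    (hmul : ∀ x ∈ A, ∀ y ∈ A, H.mul (x, y) ∈ A) (hinv : ∀ x ∈ A, H.inv x ∈ A) :
    HGroup A :=
  let ι : C(A, P) := (ContinuousMap.id P).restrict A
  { pt := ⟨H.pt, hpt⟩
    mul := ⟨fun p => ⟨H.mul (p.1, p.2), hmul _ p.1.2 _ p.2.2⟩, by fun_prop⟩
    inv := ⟨fun x => ⟨H.inv x, hinv _ x.2⟩, by fun_prop⟩
    mul_pt := Subtype.ext H.mul_pt
    inv_pt := Subtype.ext H.inv_pt
    left_id := hA.homotopicRel_of_comp_val <|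
      H.left_id.precomp ι <| Set.mapsTo_singleton.2 rfl
    right_id := hA.homotopicRel_of_comp_val <|
      H.right_id.precomp ι <| Set.mapsTo_singleton.2 rfl
    left_inv := hA.homotopicRel_of_comp_val <|
      H.left_inv.precomp ι <| Set.mapsTo_singleton.2 rfl
    right_inv := hA.homotopicRel_of_comp_val <|
      H.right_inv.precomp ι <| Set.mapsTo_singleton.2 rfl
    assoc := hA.homotopicRel_of_comp_val <|
      H.assoc.precomp (ι.prodMap (ι.prodMap ι)) <| Set.mapsTo_singleton.2 rfl }

end HGroup

/-- A saturated subset of an H-group containing the base point and closed under the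
multiplication and the homotopy inverse is a sub-H-group (with the restricted structure
maps); in particular the inclusion is a monomorphism in the pointed homotopy category. -/
theorem stmt_6 {P : Type u} [TopologicalSpace P] (H : HGroup P) (A : Set P)
    (hA : Saturated A) (hpt : H.pt ∈ A)
    (hmul : ∀ x ∈ A, ∀ y ∈ A, H.mul (x, y) ∈ A) (hinv : ∀ x ∈ A, H.inv x ∈ A) :
    ∃ S : SubHGroup H, S.carrier = A ∧
      (∀ p : ↥S.carrier × ↥S.carrier, (S.struct.mul p : P) = H.mul (p.1, p.2)) ∧
      (∀ x : ↥S.carrier, (S.struct.inv x : P) = H.inv x) ∧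
      ∀ (Z : Type u) [TopologicalSpace Z] (z : Z) (h₁ h₂ : C(Z, ↥S.carrier)),
        HomotopicRel ((⟨Subtype.val, continuous_subtype_val⟩ : C(↥S.carrier, P)).comp h₁)
          ((⟨Subtype.val, continuous_subtype_val⟩ : C(↥S.carrier, P)).comp h₂) {z} →
        HomotopicRel h₁ h₂ {z} := by
  exact ⟨⟨A, H.restrict A hA hpt hmul hinv, rfl, .refl _, .refl _⟩, rfl, fun _ => rfl,
    fun _ => rfl, fun _ _ _ _ _ h => hA.homotopicRel_of_comp_val h⟩
end

section
/- Third H-isomorphism theorem: if N and M are normal saturated sub-H-groups of an H-group P with N ⊆ M, then M/N is a normal subgroup of P/N and P/M ≅ (P/N)/(M/N). -/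
open ContinuousMap

universe u v

section Quot

variable {α : Type*} {r : α → α → Prop}

theorem Quot.exists_mem_mk_eq_iff {s : Set α} (hs : ∀ a b, r a b → (a ∈ s ↔ b ∈ s)) (a : α) :
    (∃ b ∈ s, Quot.mk r a = Quot.mk r b) ↔ a ∈ s :=
  ⟨fun ⟨_, hb, he⟩ => Eq.mpr (congrArg (Quot.lift (· ∈ s) fun a b h => propext (hs a b h)) he) hb,
    fun ha => ⟨a, ha, rfl⟩⟩

/-- The third isomorphism theorem for bare quotients: `α/s ≃ (α/r)/t` when `r ≤ s` and `t` is
`s` read on classes. -/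
def Quot.equivQuotQuot {s : α → α → Prop} {t : Quot r → Quot r → Prop}
    (hrs : ∀ a b, r a b → s a b) (hst : ∀ a b, s a b ↔ t (Quot.mk r a) (Quot.mk r b)) :
    Quot s ≃ Quot t where
  toFun := Quot.lift (fun a => Quot.mk t (Quot.mk r a)) fun a b h => Quot.sound ((hst a b).1 h)
  invFun := Quot.lift (Quot.lift (Quot.mk s) fun a b h => Quot.sound (hrs a b h)) <| by
    rintro ⟨a⟩ ⟨b⟩ h
    exact Quot.sound ((hst a b).2 h)
  left_inv := by rintro ⟨a⟩; rfl
  right_inv := by rintro ⟨⟨a⟩⟩; rfl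

@[simp]
theorem Quot.equivQuotQuot_mk {s : α → α → Prop} {t : Quot r → Quot r → Prop}
    (hrs : ∀ a b, r a b → s a b) (hst : ∀ a b, s a b ↔ t (Quot.mk r a) (Quot.mk r b)) (a : α) :
    Quot.equivQuotQuot hrs hst (Quot.mk s a) = Quot.mk t (Quot.mk r a) :=
  rfl

end Quot

section Jtn

variable {P : Type u} [TopologicalSpace P] {S T : Set P} {g : P}

theorem Jtn.mono (hST : S ⊆ T) : Jtn S g → Jtn T g :=
  fun ⟨s, hs, hj⟩ => ⟨s, hST hs, hj⟩

theorem jtn_iff_pc_mem_image : Jtn S g ↔ pc g ∈ pc '' S :=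
  exists_congr fun _ => and_congr_right fun _ =>
    ⟨fun h => (Quotient.sound h).symm, fun h => Quotient.exact h.symm⟩

theorem Saturated.jtn_iff (hS : Saturated S) : Jtn S g ↔ g ∈ S :=
  ⟨fun ⟨s, hs, hj⟩ => hS s hs g hj.symm, fun hg => ⟨g, hg, Joined.refl g⟩⟩

theorem cosetRel_mono {H : HGroup P} (hST : S ⊆ T) {g h : P} :
    cosetRel H S g h → cosetRel H T g h :=
  Jtn.mono hST

end Jtn

namespace HGroup

variable {P : Type u} [TopologicalSpace P] (H : HGroup P)

theorem joined_mul {a a' b b' : P} (ha : Joined a a') (hb : Joined b b') :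
    Joined (H.mul (a, b)) (H.mul (a', b')) :=
  let ⟨p⟩ := ha; let ⟨q⟩ := hb; ⟨(p.prod q).map H.mul.continuous⟩

theorem joined_inv {a a' : P} (ha : Joined a a') : Joined (H.inv a) (H.inv a') :=
  let ⟨p⟩ := ha; ⟨p.map H.inv.continuous⟩

/-- A copy of `π₀ P`, so that it can carry the group structure induced by `H`. -/
def Pi0 (_H : HGroup P) : Type u := ZerothHomotopy P

def toPi0 (g : P) : H.Pi0 := pc g

instance : Mul H.Pi0 :=
  ⟨Quotient.map₂ (fun a b => H.mul (a, b)) fun _ _ ha _ _ hb => H.joined_mul ha hb⟩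

instance : Inv H.Pi0 := ⟨Quotient.map H.inv fun _ _ => H.joined_inv⟩

instance : One H.Pi0 := ⟨H.toPi0 H.pt⟩

instance : Group H.Pi0 :=
  Group.ofLeftAxioms
    (by rintro ⟨a⟩ ⟨b⟩ ⟨c⟩; exact Quotient.sound (H.assoc.joined (a, b, c)))
    (by rintro ⟨a⟩; exact Quotient.sound (H.left_id.joined a))
    (by rintro ⟨a⟩; exact Quotient.sound (H.left_inv.joined a))

theorem toPi0_mul (a b : P) : H.toPi0 (H.mul (a, b)) = H.toPi0 a * H.toPi0 b := rfl

theorem toPi0_inv (a : P) : H.toPi0 (H.inv a) = (H.toPi0 a)⁻¹ := rfl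

end HGroup

namespace SubHGroup

variable {P : Type u} [TopologicalSpace P] {H : HGroup P} (M : SubHGroup H) {g h : P}

theorem pt_mem : H.pt ∈ M.carrier :=
  M.pt_val ▸ M.struct.pt.2

theorem jtn_mul (hg : g ∈ M.carrier) (hh : h ∈ M.carrier) : Jtn M.carrier (H.mul (g, h)) :=
  ⟨_, (M.struct.mul (⟨g, hg⟩, ⟨h, hh⟩)).2, (M.incl_mul.joined (⟨g, hg⟩, ⟨h, hh⟩)).symm⟩

theorem jtn_inv (hg : g ∈ M.carrier) : Jtn M.carrier (H.inv g) :=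
  ⟨_, (M.struct.inv ⟨g, hg⟩).2, (M.incl_inv.joined ⟨g, hg⟩).symm⟩

def toPi0Subgroup : Subgroup H.Pi0 where
  carrier := H.toPi0 '' M.carrier
  one_mem' := ⟨H.pt, M.pt_mem, rfl⟩
  mul_mem' := by
    rintro _ _ ⟨a, ha, rfl⟩ ⟨b, hb, rfl⟩
    exact jtn_iff_pc_mem_image.1 (M.jtn_mul ha hb)
  inv_mem' := by
    rintro _ ⟨a, ha, rfl⟩
    exact jtn_iff_pc_mem_image.1 (M.jtn_inv ha)

variable {M}

theorem toPi0_mem_toPi0Subgroup_iff : H.toPi0 g ∈ M.toPi0Subgroup ↔ Jtn M.carrier g :=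
  jtn_iff_pc_mem_image.symm

theorem mul_mem (hMs : Saturated M.carrier) (hg : g ∈ M.carrier) (hh : h ∈ M.carrier) :
    H.mul (g, h) ∈ M.carrier :=
  hMs.jtn_iff.1 (M.jtn_mul hg hh)

theorem inv_mem (hMs : Saturated M.carrier) (hg : g ∈ M.carrier) : H.inv g ∈ M.carrier :=
  hMs.jtn_iff.1 (M.jtn_inv hg)

theorem mem_iff_of_cosetRel (hMs : Saturated M.carrier) (hc : cosetRel H M.carrier g h) :
    g ∈ M.carrier ↔ h ∈ M.carrier := by
  simp only [← hMs.jtn_iff, ← toPi0_mem_toPi0Subgroup_iff]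
  have hgh : H.toPi0 g * (H.toPi0 h)⁻¹ ∈ M.toPi0Subgroup := by
    rw [← H.toPi0_inv, ← H.toPi0_mul]
    exact toPi0_mem_toPi0Subgroup_iff.2 hc
  simpa only [inv_mul_cancel_right] using
    M.toPi0Subgroup.mul_mem_cancel_left hgh (y := H.toPi0 h)

end SubHGroup

theorem stmt_14_general {P : Type u} [TopologicalSpace P] (H : HGroup P) (M N : SubHGroup H)
    (hMs : Saturated M.carrier)
    (hM : M.Normal) (hsub : N.carrier ⊆ M.carrier)
    (m : Quot (cosetRel H N.carrier) → Quot (cosetRel H N.carrier) →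
      Quot (cosetRel H N.carrier))
    (hm : ∀ g h : P, m (Quot.mk _ g) (Quot.mk _ h) = Quot.mk _ (H.mul (g, h)))
    (i : Quot (cosetRel H N.carrier) → Quot (cosetRel H N.carrier))
    (hi : ∀ g : P, i (Quot.mk _ g) = Quot.mk _ (H.inv g))
    (mP : Quot (cosetRel H M.carrier) → Quot (cosetRel H M.carrier) →
      Quot (cosetRel H M.carrier))
    (hmP : ∀ g h : P, mP (Quot.mk _ g) (Quot.mk _ h) = Quot.mk _ (H.mul (g, h)))
    (m₂ : Quot (fun x y : Quot (cosetRel H N.carrier) =>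
        m x (i y) ∈ {x : Quot (cosetRel H N.carrier) | ∃ g ∈ M.carrier, x = Quot.mk _ g}) →
      Quot (fun x y : Quot (cosetRel H N.carrier) =>
        m x (i y) ∈ {x : Quot (cosetRel H N.carrier) | ∃ g ∈ M.carrier, x = Quot.mk _ g}) →
      Quot (fun x y : Quot (cosetRel H N.carrier) =>
        m x (i y) ∈ {x : Quot (cosetRel H N.carrier) | ∃ g ∈ M.carrier, x = Quot.mk _ g}))
    (hm₂ : ∀ x y : Quot (cosetRel H N.carrier),
      m₂ (Quot.mk _ x) (Quot.mk _ y) = Quot.mk _ (m x y)) :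
    (Quot.mk (cosetRel H N.carrier) H.pt ∈
        {x : Quot (cosetRel H N.carrier) | ∃ g ∈ M.carrier, x = Quot.mk _ g}) ∧
    (∀ x ∈ {x : Quot (cosetRel H N.carrier) | ∃ g ∈ M.carrier, x = Quot.mk _ g},
      ∀ y ∈ {x : Quot (cosetRel H N.carrier) | ∃ g ∈ M.carrier, x = Quot.mk _ g},
        m x y ∈ {x : Quot (cosetRel H N.carrier) | ∃ g ∈ M.carrier, x = Quot.mk _ g}) ∧
    (∀ x ∈ {x : Quot (cosetRel H N.carrier) | ∃ g ∈ M.carrier, x = Quot.mk _ g},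
      i x ∈ {x : Quot (cosetRel H N.carrier) | ∃ g ∈ M.carrier, x = Quot.mk _ g}) ∧
    (∀ x : Quot (cosetRel H N.carrier),
      ∀ y ∈ {x : Quot (cosetRel H N.carrier) | ∃ g ∈ M.carrier, x = Quot.mk _ g},
        m (m x y) (i x) ∈
          {x : Quot (cosetRel H N.carrier) | ∃ g ∈ M.carrier, x = Quot.mk _ g}) ∧
    ∃ θ : Quot (cosetRel H M.carrier) ≃
        Quot (fun x y : Quot (cosetRel H N.carrier) =>
          m x (i y) ∈ {x : Quot (cosetRel H N.carrier) | ∃ g ∈ M.carrier, x = Quot.mk _ g}),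
      (∀ g : P, θ (Quot.mk _ g) = Quot.mk _ (Quot.mk _ g)) ∧
      ∀ a b, θ (mP a b) = m₂ (θ a) (θ b) := by
  have mem_M_mod_N (g : P) :
      (∃ g' ∈ M.carrier, Quot.mk (cosetRel H N.carrier) g = Quot.mk _ g') ↔ g ∈ M.carrier :=
    Quot.exists_mem_mk_eq_iff
      (fun _ _ h => SubHGroup.mem_iff_of_cosetRel hMs (cosetRel_mono hsub h)) g
  refine ⟨(mem_M_mod_N _).2 M.pt_mem, ?_, ?_, ?_, ?_⟩
  · rintro _ ⟨g, hg, rfl⟩ _ ⟨h, hh, rfl⟩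
    rw [hm]
    exact (mem_M_mod_N _).2 (SubHGroup.mul_mem hMs hg hh)
  · rintro _ ⟨g, hg, rfl⟩
    rw [hi]
    exact (mem_M_mod_N _).2 (SubHGroup.inv_mem hMs hg)
  · rintro ⟨g⟩ _ ⟨h, hh, rfl⟩
    rw [hm, hi, hm]
    exact (mem_M_mod_N _).2 (hMs.jtn_iff.1 (hM g h hh))
  · refine ⟨Quot.equivQuotQuot (fun _ _ => cosetRel_mono hsub) fun g h => ?_, fun _ => rfl, ?_⟩
    · rw [hi, hm, Set.mem_ofPred_eq, mem_M_mod_N]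
      exact hMs.jtn_iff
    · rintro ⟨g⟩ ⟨h⟩
      simp only [hmP, Quot.equivQuotQuot_mk, hm₂, hm]

/-- Third H-isomorphism theorem: for normal saturated sub-H-groups `N ⊆ M` of `P`,
`M/N` is a normal subgroup of `P/N` and `P/M ≅ (P/N)/(M/N)`. -/
theorem stmt_14 {P : Type u} [TopologicalSpace P] (H : HGroup P) (M N : SubHGroup H)
    (hMs : Saturated M.carrier) (hNs : Saturated N.carrier)
    (hM : M.Normal) (hN : N.Normal) (hsub : N.carrier ⊆ M.carrier)
    (m : Quot (cosetRel H N.carrier) → Quot (cosetRel H N.carrier) →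
      Quot (cosetRel H N.carrier))
    (hm : ∀ g h : P, m (Quot.mk _ g) (Quot.mk _ h) = Quot.mk _ (H.mul (g, h)))
    (i : Quot (cosetRel H N.carrier) → Quot (cosetRel H N.carrier))
    (hi : ∀ g : P, i (Quot.mk _ g) = Quot.mk _ (H.inv g))
    (mP : Quot (cosetRel H M.carrier) → Quot (cosetRel H M.carrier) →
      Quot (cosetRel H M.carrier))
    (hmP : ∀ g h : P, mP (Quot.mk _ g) (Quot.mk _ h) = Quot.mk _ (H.mul (g, h)))
    (m₂ : Quot (fun x y : Quot (cosetRel H N.carrier) =>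
        m x (i y) ∈ {x : Quot (cosetRel H N.carrier) | ∃ g ∈ M.carrier, x = Quot.mk _ g}) →
      Quot (fun x y : Quot (cosetRel H N.carrier) =>
        m x (i y) ∈ {x : Quot (cosetRel H N.carrier) | ∃ g ∈ M.carrier, x = Quot.mk _ g}) →
      Quot (fun x y : Quot (cosetRel H N.carrier) =>
        m x (i y) ∈ {x : Quot (cosetRel H N.carrier) | ∃ g ∈ M.carrier, x = Quot.mk _ g}))
    (hm₂ : ∀ x y : Quot (cosetRel H N.carrier),
      m₂ (Quot.mk _ x) (Quot.mk _ y) = Quot.mk _ (m x y)) :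
    (Quot.mk (cosetRel H N.carrier) H.pt ∈
        {x : Quot (cosetRel H N.carrier) | ∃ g ∈ M.carrier, x = Quot.mk _ g}) ∧
    (∀ x ∈ {x : Quot (cosetRel H N.carrier) | ∃ g ∈ M.carrier, x = Quot.mk _ g},
      ∀ y ∈ {x : Quot (cosetRel H N.carrier) | ∃ g ∈ M.carrier, x = Quot.mk _ g},
        m x y ∈ {x : Quot (cosetRel H N.carrier) | ∃ g ∈ M.carrier, x = Quot.mk _ g}) ∧
    (∀ x ∈ {x : Quot (cosetRel H N.carrier) | ∃ g ∈ M.carrier, x = Quot.mk _ g},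
      i x ∈ {x : Quot (cosetRel H N.carrier) | ∃ g ∈ M.carrier, x = Quot.mk _ g}) ∧
    (∀ x : Quot (cosetRel H N.carrier),
      ∀ y ∈ {x : Quot (cosetRel H N.carrier) | ∃ g ∈ M.carrier, x = Quot.mk _ g},
        m (m x y) (i x) ∈
          {x : Quot (cosetRel H N.carrier) | ∃ g ∈ M.carrier, x = Quot.mk _ g}) ∧
    ∃ θ : Quot (cosetRel H M.carrier) ≃
        Quot (fun x y : Quot (cosetRel H N.carrier) =>
          m x (i y) ∈ {x : Quot (cosetRel H N.carrier) | ∃ g ∈ M.carrier, x = Quot.mk _ g}),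
      (∀ g : P, θ (Quot.mk _ g) = Quot.mk _ (Quot.mk _ g)) ∧
      ∀ a b, θ (mP a b) = m₂ (θ a) (θ b) :=
  stmt_14_general H M N hMs hM hsub m hm i hi mP hmP m₂ hm₂
end

section
/- Let P be an H-group satisfying η∘μ ≃ μ∘(η×η)∘T, where T(x,y) = (y,x). Define HInn(P) as the set of homotopy classes [φ_a], a ∈ P, of inner H-automorphisms φ_a(g) = a·(g·a⁻¹). Then HInn(P) is a group under [φ_a][φ_b] = [φ_{a·b}], and it is isomorphic to P/Z(P), where Z(P) = { g ∈ P : μ(g,−) ≃ μ(−,g) } is the center of P. -/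
open ContinuousMap

universe u v

/-- The inner automorphism `φ_a(g) = a·(g·a⁻¹)`. -/
def phiA {P : Type u} [TopologicalSpace P] (H : HGroup P) (a : P) : C(P, P) :=
  ⟨fun g => H.mul (a, H.mul (g, H.inv a)), by fun_prop⟩

/-- The center of an H-group: points whose left and right translations are homotopic. -/
def center {P : Type u} [TopologicalSpace P] (H : HGroup P) : Set P :=
  {g : P | (⟨fun x => H.mul (g, x), by fun_prop⟩ : C(P, P)).Homotopic
    ⟨fun x => H.mul (x, g), by fun_prop⟩}

/-- `HInn P`: the homotopy classes of inner H-automorphisms. -/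
def HInn {P : Type u} [TopologicalSpace P] (H : HGroup P) :=
  Quot (fun a b : P => (phiA H a).Homotopic (phiA H b))

/-!
Free homotopy classes of maps `X → P` form a group `[X, P]` under pointwise multiplication, and
`a ↦ [const a]` is multiplicative. In `[P, P]` the class of `φ_a` is the conjugate of `ι = [id]` by
`[const a]`, while `a ∈ Z(P)` says that `[const a]` commutes with `ι`; pulling back along an
arbitrary `f : P → P` shows that `[const a]` then commutes with every `[f]`, i.e. lies in the
center of `[P, P]`. Hence both `φ_a ≃ φ_b` and the coset relation of `Z(P)` say that `[const a]`
and `[const b]` agree in `[P, P] ⧸ Z([P, P])`, and the group structure of `HInn(P)` and its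
identification with `P/Z(P)` are pulled back from that quotient group.
-/

def ContinuousMap.Homotopic.setoid (X Y : Type*) [TopologicalSpace X] [TopologicalSpace Y] :
    Setoid C(X, Y) :=
  ⟨Homotopic, Homotopic.equivalence⟩

theorem conj_eq_conj_iff_commute {G : Type*} [Group G] {x y g : G} :
    x * g * x⁻¹ = y * g * y⁻¹ ↔ Commute (y⁻¹ * x) g := by
  rw [Commute, SemiconjBy, mul_inv_eq_iff_eq_mul, mul_assoc, mul_assoc, ← inv_mul_eq_iff_eq_mul,
    ← mul_assoc, ← mul_assoc]

theorem jtn_iff_mem_of_saturated {P : Type*} [TopologicalSpace P] {S : Set P} (hS : Saturated S)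
    {g : P} : Jtn S g ↔ g ∈ S :=
  ⟨fun ⟨s, hs, hgs⟩ => hS s hs g hgs.symm, fun hg => ⟨g, hg, .refl g⟩⟩

namespace HGroup

variable {P X Y : Type*} [TopologicalSpace P] [TopologicalSpace X] [TopologicalSpace Y]
  (H : HGroup P)

def mapMul (f g : C(X, P)) : C(X, P) := H.mul.comp (f.prodMk g)

def mapInv (f : C(X, P)) : C(X, P) := H.inv.comp f

variable {H}

theorem mapMul_congr {f f' g g' : C(X, P)} (hf : f.Homotopic f') (hg : g.Homotopic g') :
    (H.mapMul f g).Homotopic (H.mapMul f' g') :=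
  (Homotopic.refl H.mul).comp (hf.prodMk hg)

theorem mapInv_congr {f f' : C(X, P)} (hf : f.Homotopic f') :
    (H.mapInv f).Homotopic (H.mapInv f') :=
  (Homotopic.refl H.inv).comp hf

variable (H)

theorem mapMul_assoc (f g k : C(X, P)) :
    (H.mapMul (H.mapMul f g) k).Homotopic (H.mapMul f (H.mapMul g k)) :=
  H.assoc.homotopic.comp (.refl (f.prodMk (g.prodMk k)))

theorem const_mapMul (f : C(X, P)) : (H.mapMul (const X H.pt) f).Homotopic f :=
  H.left_id.homotopic.comp (.refl f)

theorem mapInv_mapMul (f : C(X, P)) : (H.mapMul (H.mapInv f) f).Homotopic (const X H.pt) :=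
  H.left_inv.homotopic.comp (.refl f)

/-- `[X, P]`; the H-group is an argument only so that the group structure below can be an
instance. -/
def HomotopyClasses (_H : HGroup P) (X : Type*) [TopologicalSpace X] : Type _ :=
  Quotient (Homotopic.setoid X P)

instance : Mul (H.HomotopyClasses X) :=
  ⟨Quotient.map₂ H.mapMul fun _ _ hf _ _ hg => mapMul_congr hf hg⟩

instance : Inv (H.HomotopyClasses X) :=
  ⟨Quotient.map H.mapInv fun _ _ => mapInv_congr⟩

instance : One (H.HomotopyClasses X) :=
  ⟨Quotient.mk _ (const X H.pt)⟩

instance : Group (H.HomotopyClasses X) :=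
  Group.ofLeftAxioms
    (by rintro ⟨f⟩ ⟨g⟩ ⟨k⟩; exact Quotient.sound (H.mapMul_assoc f g k))
    (by rintro ⟨f⟩; exact Quotient.sound (H.const_mapMul f))
    (by rintro ⟨f⟩; exact Quotient.sound (H.mapInv_mapMul f))

def homotopyClass (f : C(X, P)) : H.HomotopyClasses X := Quotient.mk _ f

def precomp (f : C(X, Y)) : H.HomotopyClasses Y →* H.HomotopyClasses X where
  toFun := Quotient.map (·.comp f) fun _ _ h => h.comp (.refl f)
  map_one' := rfl
  map_mul' := by rintro ⟨g⟩ ⟨k⟩; rfl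

variable (X) in
def constClass (a : P) : H.HomotopyClasses X := H.homotopyClass (const X a)

def idClass : H.HomotopyClasses P := H.homotopyClass (ContinuousMap.id P)

theorem constClass_mul (a b : P) :
    H.constClass X (H.mul (a, b)) = H.constClass X a * H.constClass X b := rfl

theorem constClass_inv (a : P) : H.constClass X (H.inv a) = (H.constClass X a)⁻¹ := rfl

theorem constClass_eq_of_joined {a b : P} (h : Joined a b) : H.constClass X a = H.constClass X b :=
  Quotient.sound ⟨h.somePath.toHomotopyConst⟩

theorem precomp_constClass (f : C(X, Y)) (a : P) :
    H.precomp f (H.constClass Y a) = H.constClass X a := rfl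

theorem precomp_idClass (f : C(X, P)) : H.precomp f H.idClass = H.homotopyClass f := rfl

variable {H} in
theorem homotopyClass_eq_iff {f g : C(X, P)} :
    H.homotopyClass f = H.homotopyClass g ↔ f.Homotopic g :=
  Quotient.eq

theorem mem_center_iff {s : P} : s ∈ center H ↔ Commute (H.constClass P s) H.idClass :=
  homotopyClass_eq_iff.symm

theorem constClass_mem_center_iff {s : P} :
    H.constClass P s ∈ Subgroup.center (H.HomotopyClasses P) ↔ s ∈ center H := by
  rw [Subgroup.mem_center_iff, mem_center_iff]
  refine ⟨fun h => (h _).symm, fun h => ?_⟩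
  refine Quotient.ind fun f => ?_
  have := congrArg (H.precomp f) h
  rw [map_mul, map_mul, precomp_constClass, precomp_idClass] at this
  exact this.symm

theorem saturated_center : Saturated (center H) := fun s hs x hsx => by
  rwa [mem_center_iff, ← H.constClass_eq_of_joined hsx, ← mem_center_iff]

theorem phiA_class (a : P) :
    H.homotopyClass (phiA H a) =
      H.constClass P a * H.idClass * (H.constClass P a)⁻¹ := by
  rw [mul_assoc]; rfl

def toQuotCenter (a : P) : H.HomotopyClasses P ⧸ Subgroup.center (H.HomotopyClasses P) :=
  H.constClass P a

theorem toQuotCenter_mul (a b : P) :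
    H.toQuotCenter (H.mul (a, b)) = H.toQuotCenter a * H.toQuotCenter b := rfl

theorem toQuotCenter_inv (a : P) : H.toQuotCenter (H.inv a) = (H.toQuotCenter a)⁻¹ := rfl

theorem toQuotCenter_pt : H.toQuotCenter H.pt = 1 := rfl

variable {H}

theorem toQuotCenter_eq_iff_inv_mul_mem {a b : P} :
    H.toQuotCenter a = H.toQuotCenter b ↔ H.mul (H.inv a, b) ∈ center H := by
  rw [toQuotCenter, toQuotCenter, QuotientGroup.eq, ← constClass_inv, ← constClass_mul,
    constClass_mem_center_iff]

theorem toQuotCenter_eq_iff_mul_inv_mem {a b : P} :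
    H.toQuotCenter a = H.toQuotCenter b ↔ H.mul (a, H.inv b) ∈ center H := by
  rw [toQuotCenter, toQuotCenter, QuotientGroup.eq_iff_div_mem, div_eq_mul_inv, ← constClass_inv,
    ← constClass_mul, constClass_mem_center_iff]

theorem phiA_homotopic_iff {a b : P} :
    (phiA H a).Homotopic (phiA H b) ↔ H.toQuotCenter a = H.toQuotCenter b := by
  rw [← homotopyClass_eq_iff, phiA_class, phiA_class, conj_eq_conj_iff_commute, ← constClass_inv,
    ← constClass_mul, ← mem_center_iff, ← toQuotCenter_eq_iff_inv_mul_mem, eq_comm]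

theorem cosetRel_center_iff {a b : P} :
    cosetRel H (center H) a b ↔ H.toQuotCenter a = H.toQuotCenter b := by
  rw [cosetRel, jtn_iff_mem_of_saturated H.saturated_center, toQuotCenter_eq_iff_mul_inv_mem]

end HGroup

namespace HInn

open HGroup

variable {P : Type*} [TopologicalSpace P] {H : HGroup P}

theorem mk_eq_mk_of_toQuotCenter_eq {a b : P} (h : H.toQuotCenter a = H.toQuotCenter b) :
    (Quot.mk _ a : HInn H) = Quot.mk _ b :=
  Quot.sound (phiA_homotopic_iff.2 h)

instance : Mul (HInn H) :=
  ⟨Quot.map₂ (fun a b => H.mul (a, b))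
    (fun a _ _ h => phiA_homotopic_iff.2 <| by
      rw [toQuotCenter_mul, toQuotCenter_mul, phiA_homotopic_iff.1 h])
    (fun _ _ b h => phiA_homotopic_iff.2 <| by
      rw [toQuotCenter_mul, toQuotCenter_mul, phiA_homotopic_iff.1 h])⟩

instance : Inv (HInn H) :=
  ⟨Quot.map H.inv fun _ _ h => phiA_homotopic_iff.2 <| by
    rw [toQuotCenter_inv, toQuotCenter_inv, phiA_homotopic_iff.1 h]⟩

instance : One (HInn H) := ⟨Quot.mk _ H.pt⟩

instance : Group (HInn H) :=
  Group.ofLeftAxioms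
    (by rintro ⟨a⟩ ⟨b⟩ ⟨c⟩; exact mk_eq_mk_of_toQuotCenter_eq (by simp only [toQuotCenter_mul, mul_assoc]))
    (by rintro ⟨a⟩; exact mk_eq_mk_of_toQuotCenter_eq (by rw [toQuotCenter_mul, toQuotCenter_pt, one_mul]))
    (by rintro ⟨a⟩; exact mk_eq_mk_of_toQuotCenter_eq (by
      rw [toQuotCenter_mul, toQuotCenter_inv, toQuotCenter_pt, inv_mul_cancel]))

variable (H) in
def quotCenterEquiv : Quot (cosetRel H (center H)) ≃ HInn H :=
  Quot.congr (Equiv.refl P) fun _ _ => cosetRel_center_iff.trans phiA_homotopic_iff.symm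

end HInn

theorem stmt_17_general {P : Type u} [TopologicalSpace P] (H : HGroup P)
    (mZ : Quot (cosetRel H (center H)) → Quot (cosetRel H (center H)) →
      Quot (cosetRel H (center H)))
    (hmZ : ∀ g h : P, mZ (Quot.mk _ g) (Quot.mk _ h) = Quot.mk _ (H.mul (g, h))) :
    ∃ m : HInn H → HInn H → HInn H,
      (∀ a b : P, m (Quot.mk _ a) (Quot.mk _ b) = Quot.mk _ (H.mul (a, b))) ∧
      (∀ x y z, m (m x y) z = m x (m y z)) ∧
      (∀ x, m (Quot.mk _ H.pt) x = x) ∧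
      (∀ x, m x (Quot.mk _ H.pt) = x) ∧
      (∃ i : HInn H → HInn H,
        (∀ a : P, i (Quot.mk _ a) = Quot.mk _ (H.inv a)) ∧
        ∀ x, m (i x) x = Quot.mk _ H.pt ∧ m x (i x) = Quot.mk _ H.pt) ∧
      ∃ θ : Quot (cosetRel H (center H)) ≃ HInn H,
        (∀ a : P, θ (Quot.mk _ a) = Quot.mk _ a) ∧
        ∀ x y, θ (mZ x y) = m (θ x) (θ y) := by
  refine ⟨(· * ·), fun _ _ => rfl, mul_assoc, one_mul, mul_one,
    ⟨Inv.inv, fun _ => rfl, fun x => ⟨inv_mul_cancel x, mul_inv_cancel x⟩⟩,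
    HInn.quotCenterEquiv H, fun _ => rfl, ?_⟩
  rintro ⟨a⟩ ⟨b⟩
  rw [hmZ]
  rfl

/-- If `η∘μ ≃ μ∘(η×η)∘T`, then `HInn(P)` is a group under `[φ_a][φ_b] = [φ_{a·b}]`,
isomorphic to `P/Z(P)`. -/
theorem stmt_17 {P : Type u} [TopologicalSpace P] (H : HGroup P)
    (hT : (H.inv.comp H.mul).Homotopic
      (H.mul.comp ((H.inv.prodMap H.inv).comp ⟨Prod.swap, continuous_swap⟩)))
    (mZ : Quot (cosetRel H (center H)) → Quot (cosetRel H (center H)) →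
      Quot (cosetRel H (center H)))
    (hmZ : ∀ g h : P, mZ (Quot.mk _ g) (Quot.mk _ h) = Quot.mk _ (H.mul (g, h))) :
    ∃ m : HInn H → HInn H → HInn H,
      (∀ a b : P, m (Quot.mk _ a) (Quot.mk _ b) = Quot.mk _ (H.mul (a, b))) ∧
      (∀ x y z, m (m x y) z = m x (m y z)) ∧
      (∀ x, m (Quot.mk _ H.pt) x = x) ∧
      (∀ x, m x (Quot.mk _ H.pt) = x) ∧
      (∃ i : HInn H → HInn H,
        (∀ a : P, i (Quot.mk _ a) = Quot.mk _ (H.inv a)) ∧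
        ∀ x, m (i x) x = Quot.mk _ H.pt ∧ m x (i x) = Quot.mk _ H.pt) ∧
      ∃ θ : Quot (cosetRel H (center H)) ≃ HInn H,
        (∀ a : P, θ (Quot.mk _ a) = Quot.mk _ a) ∧
        ∀ x y, θ (mZ x y) = m (θ x) (θ y) :=
  stmt_17_general H mZ hmZ
end
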